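/- If restricting the coordinates in S ⊆ [n] according to some assignment u makes f constant, then for every assignment u' to S, Cert_0(f_{S←u'}) + Cert_1(f_{S←u'}) ≤ Cert_0(f) + Cert_1(f) − 1, whenever f_{S←u'} is non-constant. -/
import Mathlib


open Finset

variable {ι : Type*} [Fintype ι] [DecidableEq ι]

/-- `x` with its `i`-th bit flipped. -/
def flipAt (x : ι → Bool) (i : ι) : ι → Bool := Function.update x i (!x i)

/-- `S` is a certificate for `f`'s value at `x`. -/
def IsCert (f : (ι → Bool) → Bool) (x : ι → Bool) (S : Finset ι) : Prop :=
  ∀ y : ι → Bool, (∀ i ∈ S, y i = x i) → f y = f x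

/-- Certificate complexity of `f` at `x`: minimum size of a certificate. -/
noncomputable def certAt (f : (ι → Bool) → Bool) (x : ι → Bool) : ℕ :=
  sInf {k | ∃ S : Finset ι, IsCert f x S ∧ S.card = k}

/-- Certificate complexity of `f`. -/
noncomputable def certC (f : (ι → Bool) → Bool) : ℕ :=
  sSup {k | ∃ x : ι → Bool, certAt f x = k}

/-- Influence of coordinate `i` on `f` (uniform distribution). -/
noncomputable def influence (f : (ι → Bool) → Bool) (i : ι) : ℝ :=
  ((univ.filter fun x : ι → Bool => f (flipAt x i) ≠ f x).card : ℝ) / 2 ^ Fintype.card ι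

/-- Total influence of `f`. -/
noncomputable def totalInf (f : (ι → Bool) → Bool) : ℝ := ∑ i : ι, influence f i

/-- `Pr_{x uniform}[f(x) = b]`. -/
noncomputable def probEq (f : (ι → Bool) → Bool) (b : Bool) : ℝ :=
  ((univ.filter fun x : ι → Bool => f x = b).card : ℝ) / 2 ^ Fintype.card ι

/-- Variance of `f`: `Pr[f = 0] * Pr[f = 1]`. -/
noncomputable def fvar (f : (ι → Bool) → Bool) : ℝ := probEq f false * probEq f true


/-- The restriction of `f` fixing the coordinates in `S` according to `u`. -/
def restrictSet {ι : Type*} [DecidableEq ι] (f : (ι → Bool) → Bool) (S : Finset ι)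
    (u : {j : ι // j ∈ S} → Bool) : ({j : ι // j ∉ S} → Bool) → Bool :=
  fun z => f fun j => if h : j ∈ S then u ⟨j, h⟩ else z ⟨j, h⟩

/-- `b`-certificate complexity: the maximum of `certAt f x` over `x ∈ f⁻¹(b)`
(`0` if `f⁻¹(b)` is empty). -/
noncomputable def certB {ι : Type*} [Fintype ι] [DecidableEq ι]
    (f : (ι → Bool) → Bool) (b : Bool) : ℕ :=
  sSup {k | ∃ x : ι → Bool, f x = b ∧ certAt f x = k}

omit [DecidableEq ι] in
lemma isCert_univ' (f : (ι → Bool) → Bool) (x : ι → Bool) : IsCert f x univ :=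
  fun y h => by
    have : y = x := funext fun i => h i (mem_univ i)
    rw [this]

lemma certAt_mem' (f : (ι → Bool) → Bool) (x : ι → Bool) :
    ∃ C : Finset ι, IsCert f x C ∧ C.card = certAt f x :=
  Nat.sInf_mem (⟨Finset.univ.card, univ, isCert_univ' f x, rfl⟩ :
    Set.Nonempty {k | ∃ C : Finset ι, IsCert f x C ∧ C.card = k})

lemma certAt_le_certB' (f : (ι → Bool) → Bool) (x : ι → Bool) :
    certAt f x ≤ certB f (f x) := by
  apply le_csSup
  · refine ⟨Fintype.card ι, ?_⟩
    rintro k ⟨y, -, rfl⟩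
    exact Nat.sInf_le ⟨univ, isCert_univ' f y, by simp⟩
  · exact ⟨x, rfl, rfl⟩

theorem stmt13 {ι : Type*} [Fintype ι] [DecidableEq ι] (f : (ι → Bool) → Bool) (S : Finset ι)
    (hconst : ∃ u : {j : ι // j ∈ S} → Bool,
      ∀ z z' : {j : ι // j ∉ S} → Bool, restrictSet f S u z = restrictSet f S u z') :
    ∀ u' : {j : ι // j ∈ S} → Bool,
      (∃ z z' : {j : ι // j ∉ S} → Bool, restrictSet f S u' z ≠ restrictSet f S u' z') →
      certB (restrictSet f S u') false + certB (restrictSet f S u') true + 1 ≤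
        certB f false + certB f true := by
  intro u' hne
  obtain ⟨u, hu⟩ := hconst
  obtain ⟨z₀, z₁, hz01⟩ := hne
  set g := restrictSet f S u' with hg
  set c : Bool := restrictSet f S u z₀ with hc_def
  have hc : ∀ z, restrictSet f S u z = c := fun z => hu z z₀
  -- every value of g is attained (g is non-constant on Bool)
  have zb : ∀ b : Bool, ∃ z, g z = b := by
    intro b
    by_cases h : g z₀ = b
    · exact ⟨z₀, h⟩
    · refine ⟨z₁, ?_⟩
      revert hz01 h
      cases hb0 : g z₀ <;> cases hb1 : g z₁ <;> cases b <;> simp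
  -- main restriction lemma
  have main1 : ∀ z, certAt g z ≤ certB f (g z) := by
    intro z
    set x : ι → Bool := fun j => if h : j ∈ S then u' ⟨j, h⟩ else z ⟨j, h⟩ with hx
    have hgz : g z = f x := rfl
    obtain ⟨C, hC, hCcard⟩ := certAt_mem' f x
    have hcert : IsCert g z (C.subtype (fun j => j ∉ S)) := by
      intro y hy
      show f (fun j => if h : j ∈ S then u' ⟨j, h⟩ else y ⟨j, h⟩) = f x
      apply hC
      intro i hi
      by_cases h : i ∈ S
      · simp [hx, h]
      · simp only [hx, dif_neg h]
        exact hy ⟨i, h⟩ (Finset.mem_subtype.mpr hi)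
    have h1 : certAt g z ≤ (C.subtype (fun j => j ∉ S)).card :=
      Nat.sInf_le ⟨_, hcert, rfl⟩
    have h2 : (C.subtype (fun j => j ∉ S)).card ≤ C.card := by
      rw [Finset.card_subtype]; exact Finset.card_filter_le _ _
    calc certAt g z ≤ C.card := h1.trans h2
      _ = certAt f x := hCcard
      _ ≤ certB f (f x) := certAt_le_certB' f x
      _ = certB f (g z) := by rw [hgz]
  have main2 : ∀ z, g z ≠ c → certAt g z + 1 ≤ certB f (g z) := by
    intro z hzc
    set x : ι → Bool := fun j => if h : j ∈ S then u' ⟨j, h⟩ else z ⟨j, h⟩ with hx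
    have hgz : g z = f x := rfl
    obtain ⟨C, hC, hCcard⟩ := certAt_mem' f x
    have hcert : IsCert g z (C.subtype (fun j => j ∉ S)) := by
      intro y hy
      show f (fun j => if h : j ∈ S then u' ⟨j, h⟩ else y ⟨j, h⟩) = f x
      apply hC
      intro i hi
      by_cases h : i ∈ S
      · simp [hx, h]
      · simp only [hx, dif_neg h]
        exact hy ⟨i, h⟩ (Finset.mem_subtype.mpr hi)
    -- C must meet S
    have hmeet : ∃ i ∈ C, i ∈ S := by
      by_contra hno
      push_neg at hno
      have : f (fun j => if h : j ∈ S then u ⟨j, h⟩ else z ⟨j, h⟩) = f x := by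
        apply hC
        intro i hi
        have h := hno i hi
        simp [hx, h]
      have hy : restrictSet f S u z = f x := this
      rw [hc z, ← hgz] at hy
      exact hzc hy.symm
    have h1 : certAt g z ≤ (C.subtype (fun j => j ∉ S)).card :=
      Nat.sInf_le ⟨_, hcert, rfl⟩
    have h2 : (C.subtype (fun j => j ∉ S)).card < C.card := by
      rw [Finset.card_subtype]
      apply Finset.card_lt_card
      rw [Finset.filter_ssubset]
      obtain ⟨i, hiC, hiS⟩ := hmeet
      exact ⟨i, hiC, by simp [hiS]⟩
    have h3 : certAt f x ≤ certB f (g z) := by rw [hgz]; exact certAt_le_certB' f x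
    omega
  -- bound certB g c
  obtain ⟨zc, hzc⟩ := zb c
  obtain ⟨znc, hznc⟩ := zb (!c)
  have hle_c : certB g c ≤ certB f c := by
    have hnon : Set.Nonempty {k | ∃ z, g z = c ∧ certAt g z = k} := ⟨certAt g zc, zc, hzc, rfl⟩
    apply csSup_le hnon
    rintro k ⟨z, hzb, rfl⟩
    have := main1 z
    rwa [hzb] at this
  have hznc' : g znc ≠ c := by rw [hznc]; exact Bool.not_ne_self c
  have h1c : 1 ≤ certB f (!c) := by
    have := main2 znc hznc'
    rw [hznc] at this
    omega
  have hlt : certB g (!c) ≤ certB f (!c) - 1 := by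
    have hnon : Set.Nonempty {k | ∃ z, g z = !c ∧ certAt g z = k} := ⟨certAt g znc, znc, hznc, rfl⟩
    apply csSup_le hnon
    rintro k ⟨z, hzb, rfl⟩
    have := main2 z (by rw [hzb]; exact Bool.not_ne_self c)
    rw [hzb] at this
    omega
  rcases Bool.eq_false_or_eq_true c with h | h <;> rw [h] at hle_c hlt h1c <;>
    simp only [Bool.not_false, Bool.not_true] at hlt h1c <;> omega
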